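/- arXiv:1001.0001 — 2 statements merged into one kernel-verified Lean document; each statement's English description precedes it below -/
import Mathlib

section
/- Let q be a prime power, t ≥ 1, n_1, …, n_t ≥ 1, n_0 ≥ 0, and n = n_1 + … + n_t + n_0. Identify F_q^n with blocks of sizes n_1, …, n_t, n_0 and define σ̄(x) = (σ_1(x̄_1), …, σ_t(x̄_t)) ∈ F_q^t, where σ_i(x̄_i) is the sum in F_q of the entries of the i-th block. Let C ⊆ F_q^n be a perfect code and let C* ⊆ F_q^t be a code with minimum Hamming distance at least 3 such that σ̄(c) ∈ C* for every c ∈ C. Then C* is a perfect code in F_q^t. -/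
/-! The block-sum map is surjective and does not increase Hamming distance, so it carries the
radius-1 cover of the ambient space by `C` onto a radius-1 cover of `F^t` by `C*`; minimum
distance 3 makes the covering codeword unique. -/

/-- A perfect 1-error-correcting code: every word of the ambient space is within
Hamming distance 1 of exactly one codeword. -/
def IsPerfectCode {ι α : Type*} [Fintype ι] [DecidableEq α] (C : Set (ι → α)) : Prop :=
  ∀ x : ι → α, ∃! c, c ∈ C ∧ hammingDist x c ≤ 1

section Hamming

variable {ι κ α β : Type*} [Fintype ι] [Fintype κ] [DecidableEq α] [DecidableEq β]

theorem hammingDist_comp_right_le {e : κ → ι} (he : Function.Injective e) (x y : ι → α) :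
    hammingDist (x ∘ e) (y ∘ e) ≤ hammingDist x y := by
  classical
  refine Finset.card_le_card_of_injOn e (fun k hk => ?_) he.injOn
  simpa using hk

theorem eq_of_hammingDist_le_one_of_le_one {C : Set (ι → α)}
    (hC : ∀ x ∈ C, ∀ y ∈ C, x ≠ y → 3 ≤ hammingDist x y) {x c c' : ι → α}
    (hc : c ∈ C) (hc' : c' ∈ C) (hxc : hammingDist x c ≤ 1) (hxc' : hammingDist x c' ≤ 1) :
    c = c' := by
  by_contra hne
  have hfar := hC c hc c' hc' hne
  have hnear : hammingDist c c' ≤ 2 :=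
    calc hammingDist c c' ≤ hammingDist c x + hammingDist x c' := hammingDist_triangle _ _ _
      _ ≤ 1 + 1 := Nat.add_le_add (hammingDist_comm c x ▸ hxc) hxc'
  omega

theorem IsPerfectCode.of_surjective_of_hammingDist_le {C : Set (ι → α)} {D : Set (κ → β)}
    {σ : (ι → α) → (κ → β)} (hC : IsPerfectCode C)
    (hD : ∀ x ∈ D, ∀ y ∈ D, x ≠ y → 3 ≤ hammingDist x y) (hσ : Function.Surjective σ)
    (hσ_dist : ∀ a b, hammingDist (σ a) (σ b) ≤ hammingDist a b) (hσC : ∀ c ∈ C, σ c ∈ D) :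
    IsPerfectCode D := by
  intro x
  obtain ⟨X, rfl⟩ := hσ x
  obtain ⟨c, ⟨hcC, hXc⟩, -⟩ := hC X
  have hnear : hammingDist (σ X) (σ c) ≤ 1 := (hσ_dist X c).trans hXc
  exact ⟨σ c, ⟨hσC c hcC, hnear⟩, fun d ⟨hdD, hXd⟩ =>
    eq_of_hammingDist_le_one_of_le_one hD hdD (hσC c hcC) hXd hnear⟩

end Hamming

section BlockSum

variable {ι M : Type*} {β : ι → Type*} [∀ i, Fintype (β i)] [AddCommMonoid M]

def blockSum (c : (Σ i, β i) → M) (i : ι) : M :=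
  ∑ j, c ⟨i, j⟩

theorem blockSum_surjective [∀ i, Nonempty (β i)] :
    Function.Surjective (blockSum : ((Σ i, β i) → M) → ι → M) := by
  classical
  intro x
  refine ⟨fun p => (Pi.single (Classical.arbitrary (β p.1)) (x p.1) : β p.1 → M) p.2,
    funext fun i => ?_⟩
  exact Fintype.sum_pi_single' (Classical.arbitrary (β i)) (x i)

theorem hammingDist_blockSum_le [Fintype ι] [DecidableEq M] (a b : (Σ i, β i) → M) :
    hammingDist (blockSum a) (blockSum b) ≤ hammingDist a b := by
  classical
  refine Finset.card_le_card_of_surjOn Sigma.fst fun i hi => ?_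
  obtain ⟨j, hj⟩ : ∃ j, a ⟨i, j⟩ ≠ b ⟨i, j⟩ := by
    by_contra! h
    exact (Finset.mem_filter.1 hi).2 (Finset.sum_congr rfl fun j _ => h j)
  exact ⟨⟨i, j⟩, by simpa using hj, rfl⟩

end BlockSum

theorem stmt_13_general {t n0 : ℕ} (F : Type*) [Field F] [DecidableEq F]
    (nb : Fin t → ℕ) (hnb : ∀ i, 1 ≤ nb i)
    (C : Set ((Σ i : Fin t, Fin (nb i)) ⊕ Fin n0 → F))
    (hC : IsPerfectCode C)
    (Cstar : Set (Fin t → F))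
    (hd : ∀ x ∈ Cstar, ∀ y ∈ Cstar, x ≠ y → 3 ≤ hammingDist x y)
    (hσ : ∀ c ∈ C, (fun i => ∑ j : Fin (nb i), c (Sum.inl ⟨i, j⟩)) ∈ Cstar) :
    IsPerfectCode Cstar := by
  have : ∀ i, Nonempty (Fin (nb i)) := fun i => ⟨⟨0, hnb i⟩⟩
  exact hC.of_surjective_of_hammingDist_le (σ := fun c => blockSum (c ∘ Sum.inl)) hd
    (blockSum_surjective.comp Sum.inl_injective.surjective_comp_right)
    (fun a b => (hammingDist_blockSum_le _ _).trans
      (hammingDist_comp_right_le Sum.inl_injective _ _))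
    hσ

/-- If `C` is a perfect code, `C*` is a code of minimum distance at least 3, and the
block-sum map `σ̄` sends every codeword of `C` into `C*`, then `C*` is a perfect code.
Words are identified with functions on `(Σ i, Fin (nb i)) ⊕ Fin n₀`, i.e. `t` blocks
of sizes `nb 1, …, nb t` followed by `n₀` remaining coordinates. -/
theorem stmt_13 {q t n0 : ℕ} (F : Type*) [Field F] [Fintype F] [DecidableEq F]
    (hq : Fintype.card F = q) (ht : 1 ≤ t)
    (nb : Fin t → ℕ) (hnb : ∀ i, 1 ≤ nb i)
    (C : Set ((Σ i : Fin t, Fin (nb i)) ⊕ Fin n0 → F))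
    (hC : IsPerfectCode C)
    (Cstar : Set (Fin t → F))
    (hd : ∀ x ∈ Cstar, ∀ y ∈ Cstar, x ≠ y → 3 ≤ hammingDist x y)
    (hσ : ∀ c ∈ C, (fun i => ∑ j : Fin (nb i), c (Sum.inl ⟨i, j⟩)) ∈ Cstar) :
    IsPerfectCode Cstar :=
  stmt_13_general F nb hnb C hC Cstar hd hσ
end

section
/- Let m ≥ 2 be an integer, n = (3^m − 1)/2, and t = (n − 1)/3 = (3^{m−1} − 1)/2. Then the number of perfect codes in F_3^n is at least (3 · 2^t)^{3^{t−m+1}}. -/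
open Finset Function

section Hamming

variable {ι κ α : Type*} [Fintype ι] [Fintype κ] [DecidableEq α]

theorem hammingDist_eq_sum_ite (x y : ι → α) :
    hammingDist x y = ∑ i, if x i = y i then 0 else 1 := by
  simp only [hammingDist, card_filter, ite_not]

theorem hammingDist_sumElim (x x' : ι → α) (y y' : κ → α) :
    hammingDist (Sum.elim x y) (Sum.elim x' y') = hammingDist x x' + hammingDist y y' := by
  simp only [hammingDist_eq_sum_ite]
  exact Fintype.sum_sum_type _

theorem hammingDist_comp_equiv (e : κ ≃ ι) (x y : ι → α) :
    hammingDist (x ∘ e) (y ∘ e) = hammingDist x y := by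
  simp only [hammingDist_eq_sum_ite, comp_apply]
  exact e.sum_comp fun i => if x i = y i then 0 else 1

theorem hammingDist_add_right [Add α] [IsRightCancelAdd α] (x y z : ι → α) :
    hammingDist (x + z) (y + z) = hammingDist x y :=
  hammingDist_comp (fun i a => a + z i) fun i => add_left_injective (z i)

theorem hammingDist_le_hammingDist_add_add [Add α] [IsLeftCancelAdd α]
    (y z c y' z' c' : ι → α) :
    hammingDist c c' ≤
      hammingDist y y' + hammingDist z z' + hammingDist (y + z + c) (y' + z' + c') := by
  simp only [hammingDist_eq_sum_ite, ← sum_add_distrib]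
  refine sum_le_sum fun i _ => ?_
  simp only [Pi.add_apply]
  split_ifs <;> simp_all

variable [DecidableEq ι]

theorem hammingDist_update_self_le_one (x : ι → α) (i : ι) (a : α) :
    hammingDist (update x i a) x ≤ 1 := by
  refine (card_le_card fun j hj => ?_).trans (card_singleton i).le
  by_contra hji
  simp_all [update_apply]

theorem hammingDist_update_lt {x y : ι → α} {i : ι} (h : x i ≠ y i) :
    hammingDist (update x i (y i)) y < hammingDist x y := by
  simp only [hammingDist_eq_sum_ite]
  refine sum_lt_sum (fun j _ => ?_) ⟨i, mem_univ i, by simp [h]⟩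
  rcases eq_or_ne j i with rfl | hj <;> simp [*]

end Hamming

section PerfectCode

variable {ι κ α : Type*} [Fintype ι] [Fintype κ] [DecidableEq α] {C : Set (ι → α)}

theorem IsPerfectCode.three_le_hammingDist (hC : IsPerfectCode C) {c c' : ι → α} (hc : c ∈ C)
    (hc' : c' ∈ C) (hne : c ≠ c') : 3 ≤ hammingDist c c' := by
  classical
  obtain ⟨i, hi⟩ := Function.ne_iff.1 hne
  by_contra! h
  have h₁ := hammingDist_update_self_le_one c i (c' i)
  have h₂ := hammingDist_update_lt hi
  exact hne ((hC (update c i (c' i))).unique ⟨hc, h₁⟩ ⟨hc', by omega⟩)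

theorem isPerfectCode_of_three_le_hammingDist
    (hdist : ∀ c ∈ C, ∀ c' ∈ C, c ≠ c' → 3 ≤ hammingDist c c')
    (hcover : ∀ x, ∃ c ∈ C, hammingDist x c ≤ 1) : IsPerfectCode C := by
  intro x
  obtain ⟨c, hc, hxc⟩ := hcover x
  refine ⟨c, ⟨hc, hxc⟩, fun c' ⟨hc', hxc'⟩ => by_contra fun hne => ?_⟩
  have := hdist c' hc' c hc hne
  have := hammingDist_triangle_left c' c x
  omega

theorem IsPerfectCode.image_comp_equiv (hC : IsPerfectCode C) (e : κ ≃ ι) :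
    IsPerfectCode ((· ∘ e) '' C) := by
  refine isPerfectCode_of_three_le_hammingDist ?_ fun x => ?_
  · rintro _ ⟨c, hc, rfl⟩ _ ⟨c', hc', rfl⟩ hne
    rw [hammingDist_comp_equiv]
    exact hC.three_le_hammingDist hc hc' (by rintro rfl; exact hne rfl)
  · obtain ⟨c, ⟨hc, hxc⟩, -⟩ := hC (x ∘ e.symm)
    refine ⟨c ∘ e, Set.mem_image_of_mem _ hc, ?_⟩
    rwa [← hammingDist_comp_equiv e, comp_assoc, e.symm_comp_self, comp_id] at hxc

end PerfectCode

section Ternary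

variable {ι : Type*} [Fintype ι]

theorem three_mul_hammingDist_sub_le (y z y' z' : ι → ZMod 3) :
    3 * hammingDist (y - z) (y' - z') ≤
      2 * (hammingDist y y' + hammingDist z z' + hammingDist (y + z) (y' + z')) := by
  simp only [hammingDist_eq_sum_ite, mul_sum, ← sum_add_distrib]
  refine sum_le_sum fun i _ => ?_
  simp only [Pi.add_apply, Pi.sub_apply]
  have key : ∀ a b a' b' : ZMod 3, (3 * if a - b = a' - b' then 0 else 1) ≤
      2 * ((if a = a' then 0 else 1) + (if b = b' then 0 else 1) +
        if a + b = a' + b' then 0 else 1) := by decide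
  exact key _ _ _ _

theorem three_mul_hammingDist_le_add_hammingDist_sub (y z y' z' : ι → ZMod 3) :
    3 * hammingDist y y' ≤ hammingDist y y' + hammingDist z z' + hammingDist (y + z) (y' + z') +
      3 * hammingDist (y - z) (y' - z') := by
  simp only [hammingDist_eq_sum_ite, mul_sum, ← sum_add_distrib]
  refine sum_le_sum fun i _ => ?_
  simp only [Pi.add_apply, Pi.sub_apply]
  have key : ∀ a b a' b' : ZMod 3, (3 * if a = a' then 0 else 1) ≤
      (if a = a' then 0 else 1) + (if b = b' then 0 else 1) + (if a + b = a' + b' then 0 else 1) +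
        3 * if a - b = a' - b' then 0 else 1 := by decide
  exact key _ _ _ _

theorem dotProduct_ne_zero_of_hammingNorm_eq_one {R : Type*} [Semiring R] [DecidableEq R]
    (l : ι → Rˣ) {v : ι → R} (hv : hammingNorm v = 1) : (Units.val ∘ l) ⬝ᵥ v ≠ 0 := by
  rw [hammingNorm, card_eq_one] at hv
  obtain ⟨i, hi⟩ := hv
  have hsupp : ∀ j, v j ≠ 0 ↔ j = i := fun j => by
    simpa using Finset.ext_iff.1 hi j
  rw [dotProduct, sum_eq_single i (fun j _ hj => by simp [not_not.1 ((hsupp j).not.2 hj)])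
    (by simp)]
  exact (Units.mul_right_eq_zero _).not.2 ((hsupp i).2 rfl)

end Ternary

section Vasilev

variable {ι : Type*} [Fintype ι] {C : Set (ι → ZMod 3)}

def vasilevWord (f : C → ZMod 3) (l : C → ι → (ZMod 3)ˣ) (y z : ι → ZMod 3) (c : C) :
    ι ⊕ ι ⊕ ι ⊕ Unit → ZMod 3 :=
  Sum.elim y <| Sum.elim z <| Sum.elim (y + z + c) fun _ => (Units.val ∘ l c) ⬝ᵥ (y - z) + f c

variable (C) in
def vasilevCode (f : C → ZMod 3) (l : C → ι → (ZMod 3)ˣ) : Set (ι ⊕ ι ⊕ ι ⊕ Unit → ZMod 3) :=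
  Set.range fun p : (ι → ZMod 3) × (ι → ZMod 3) × C => vasilevWord f l p.1 p.2.1 p.2.2

variable {f f' : C → ZMod 3} {l l' : C → ι → (ZMod 3)ˣ}

theorem vasilevWord_eq_vasilevWord {y z y' z' : ι → ZMod 3} {c c' : C}
    (h : vasilevWord f l y z c = vasilevWord f' l' y' z' c') :
    y = y' ∧ z = z' ∧ c = c' ∧
      (Units.val ∘ l c) ⬝ᵥ (y - z) + f c = (Units.val ∘ l' c') ⬝ᵥ (y' - z') + f' c' := by
  simp only [vasilevWord, Sum.elim_eq_iff] at h
  obtain ⟨rfl, rfl, hc, hlast⟩ := h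
  exact ⟨rfl, rfl, Subtype.ext (add_left_cancel hc), congrFun hlast ()⟩

theorem card_vasilevCode :
    Nat.card (vasilevCode C f l) = 3 ^ (2 * Fintype.card ι) * Nat.card C := by
  rw [vasilevCode, Nat.card_range_of_injective, Nat.card_prod, Nat.card_prod, Nat.card_fun,
    Nat.card_zmod, Nat.card_eq_fintype_card (α := ι)]
  · ring
  · rintro ⟨y, z, c⟩ ⟨y', z', c'⟩ h
    obtain ⟨rfl, rfl, rfl, -⟩ := vasilevWord_eq_vasilevWord h
    rfl

theorem vasilevCode_injective :
    Injective fun p : (C → ZMod 3) × (C → ι → (ZMod 3)ˣ) => vasilevCode C p.1 p.2 := by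
  classical
  rintro ⟨f, l⟩ ⟨f', l'⟩ h
  dsimp only at h
  have hlast : ∀ y z c,
      (Units.val ∘ l' c) ⬝ᵥ (y - z) + f' c = (Units.val ∘ l c) ⬝ᵥ (y - z) + f c := by
    intro y z c
    obtain ⟨⟨y', z', c'⟩, hw⟩ : vasilevWord f l y z c ∈ vasilevCode C f' l' :=
      h ▸ Set.mem_range_self (y, z, c)
    obtain ⟨rfl, rfl, rfl, hA⟩ := vasilevWord_eq_vasilevWord hw
    exact hA
  have hf : f' = f := funext fun c => by simpa using hlast 0 0 c
  refine Prod.ext hf.symm (funext fun c => funext fun i => Units.ext ?_)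
  simpa [hf, dotProduct_single] using (hlast (Pi.single i 1) 0 c).symm

theorem three_le_hammingDist_vasilevCode (hC : IsPerfectCode C) :
    ∀ w ∈ vasilevCode C f l, ∀ w' ∈ vasilevCode C f l, w ≠ w' → 3 ≤ hammingDist w w' := by
  rintro _ ⟨⟨y, z, c⟩, rfl⟩ _ ⟨⟨y', z', c'⟩, rfl⟩ hne
  simp only [vasilevWord, hammingDist_sumElim]
  rcases eq_or_ne c c' with rfl | hc
  · rw [hammingDist_add_right]
    have h₁ := three_mul_hammingDist_sub_le y z y' z'
    have h₂ := three_mul_hammingDist_le_add_hammingDist_sub y z y' z'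
    obtain hD | hD | hD : hammingDist (y - z) (y' - z') = 0 ∨ hammingDist (y - z) (y' - z') = 1 ∨
        2 ≤ hammingDist (y - z) (y' - z') := by omega
    · have hy : y ≠ y' := by
        rintro rfl
        exact hne (by rw [sub_right_injective (hammingDist_eq_zero.1 hD)])
      have := hammingDist_pos.2 hy
      omega
    · have hlast : (Units.val ∘ l c) ⬝ᵥ (y - z) + f c ≠ (Units.val ∘ l c) ⬝ᵥ (y' - z') + f c := by
        rw [hammingDist_eq_hammingNorm] at hD
        have := dotProduct_ne_zero_of_hammingNorm_eq_one (l c) hD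
        rw [dotProduct_add, dotProduct_neg] at this
        intro h
        rw [add_right_cancel h, neg_add_cancel] at this
        exact this rfl
      have : 0 < hammingDist (fun _ : Unit => (Units.val ∘ l c) ⬝ᵥ (y - z) + f c)
          (fun _ => (Units.val ∘ l c) ⬝ᵥ (y' - z') + f c) :=
        hammingDist_pos.2 (mt (congrFun · ()) hlast)
      omega
    · omega
  · have := hC.three_le_hammingDist c.2 c'.2 (Subtype.coe_ne_coe.2 hc)
    have := hammingDist_le_hammingDist_add_add y z c y' z' c'
    omega

theorem hammingDist_vasilevWord_le_one {u v w u' v' : ι → ZMod 3} {a : ZMod 3} {c : C}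
    (hd : hammingDist u u' + hammingDist v v' + hammingDist w (u' + v' + c) ≤ 1)
    (ha : a = (Units.val ∘ l c) ⬝ᵥ (u' - v') + f c) :
    hammingDist (Sum.elim u (Sum.elim v (Sum.elim w fun _ => a))) (vasilevWord f l u' v' c) ≤
      1 := by
  subst ha
  simp only [vasilevWord, hammingDist_sumElim, hammingDist_self]
  omega

theorem exists_vasilevCode_hammingDist_le_one (hC : IsPerfectCode C)
    (x : ι ⊕ ι ⊕ ι ⊕ Unit → ZMod 3) : ∃ w ∈ vasilevCode C f l, hammingDist x w ≤ 1 := by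
  obtain ⟨u, v, w, a, rfl⟩ : ∃ u v w a, x = Sum.elim u (Sum.elim v (Sum.elim w fun _ => a)) :=
    ⟨x ∘ .inl, x ∘ .inr ∘ .inl, x ∘ .inr ∘ .inr ∘ .inl, x (.inr (.inr (.inr ()))),
      by ext (i | i | i | i) <;> rfl⟩
  obtain ⟨c, ⟨hc, hwc⟩, -⟩ := hC (w - u - v)
  lift c to C using hc
  set p := u + v + c - w with hp_def
  have hp : hammingNorm p ≤ 1 := by
    rwa [hammingDist_eq_hammingNorm, show -(w - u - v) + c = p by rw [hp_def]; abel] at hwc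
  rcases eq_or_ne p 0 with hp0 | hp0
  · refine ⟨_, Set.mem_range_self (u, v, c), ?_⟩
    simp only [vasilevWord, hammingDist_sumElim, hammingDist_self,
      show u + v + c = w from sub_eq_zero.1 hp0]
    simpa using hammingDist_le_card_fintype.trans_eq Fintype.card_unit
  have hp1 : hammingNorm p = 1 := le_antisymm hp (hammingNorm_pos_iff.2 hp0)
  have hlp := dotProduct_ne_zero_of_hammingNorm_eq_one (l c) hp1
  -- `p` has weight one, so the last symbol is off by `0` or `±l(c) ⬝ p`; moving `p` out of the
  -- third block into the second or first one corrects the last symbol.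
  have hcases : ∀ b d : ZMod 3, d ≠ 0 → b = 0 ∨ b = d ∨ b = -d := by decide
  obtain ha | ha | ha := hcases (a - ((Units.val ∘ l c) ⬝ᵥ (u - v) + f c)) _ hlp
  · refine ⟨_, Set.mem_range_self (u, v, c), hammingDist_vasilevWord_le_one ?_ (sub_eq_zero.1 ha)⟩
    rw [hammingDist_self, hammingDist_self, hammingDist_eq_hammingNorm,
      show -w + (u + v + c) = p by rw [hp_def]; abel, hp1]
  · refine ⟨_, Set.mem_range_self (u, v - p, c), hammingDist_vasilevWord_le_one ?_ ?_⟩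
    · rw [hammingDist_self, hammingDist_comm, hammingDist_eq_hammingNorm,
        show -(v - p) + v = p by abel, hp1, show u + (v - p) + c = w by rw [hp_def]; abel,
        hammingDist_self]
    · rw [show u - (v - p) = (u - v) + p by abel, dotProduct_add]
      linear_combination ha
  · refine ⟨_, Set.mem_range_self (u - p, v, c), hammingDist_vasilevWord_le_one ?_ ?_⟩
    · rw [hammingDist_comm, hammingDist_eq_hammingNorm, show -(u - p) + u = p by abel, hp1,
        hammingDist_self, show u - p + v + c = w by rw [hp_def]; abel, hammingDist_self]
    · rw [show u - p - v = (u - v) - p by abel, dotProduct_sub]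
      linear_combination ha

end Vasilev

theorem IsPerfectCode.vasilevCode {ι : Type*} [Fintype ι] {C : Set (ι → ZMod 3)}
    (hC : IsPerfectCode C) (f : C → ZMod 3) (l : C → ι → (ZMod 3)ˣ) :
    IsPerfectCode (vasilevCode C f l) :=
  isPerfectCode_of_three_le_hammingDist (three_le_hammingDist_vasilevCode hC)
    (exists_vasilevCode_hammingDist_le_one hC)

theorem three_pow_succ_sub_one_div_two (k : ℕ) :
    (3 ^ (k + 1) - 1) / 2 = 3 * ((3 ^ k - 1) / 2) + 1 := by
  obtain ⟨j, hj⟩ := (Odd.pow (by decide : Odd 3) : Odd (3 ^ k))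
  rw [pow_succ, hj]
  omega

theorem le_three_pow_sub_one_div_two (k : ℕ) : k ≤ (3 ^ k - 1) / 2 := by
  have : 1 + k * 2 ≤ 3 ^ k := one_add_le_pow_of_two_add_nonneg (by norm_num) k
  omega

theorem exists_isPerfectCode_card_eq (k : ℕ) :
    ∃ C : Set (Fin ((3 ^ k - 1) / 2) → ZMod 3),
      IsPerfectCode C ∧ Nat.card C = 3 ^ ((3 ^ k - 1) / 2 - k) := by
  induction k with
  | zero =>
    refine ⟨Set.univ, fun x => ⟨x, ⟨trivial, by simp⟩, fun y _ => funext (Fin.elim0 ·)⟩, ?_⟩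
    simp
  | succ k ih =>
    obtain ⟨C, hC, hcard⟩ := ih
    let t := (3 ^ k - 1) / 2
    let e : Fin ((3 ^ (k + 1) - 1) / 2) ≃ Fin t ⊕ Fin t ⊕ Fin t ⊕ Unit :=
      Fintype.equivOfCardEq (by simp [three_pow_succ_sub_one_div_two]; ring)
    refine ⟨_, (hC.vasilevCode 0 1).image_comp_equiv e, ?_⟩
    rw [Nat.card_image_of_injective e.surjective.injective_comp_right, card_vasilevCode, hcard,
      ← pow_add, Fintype.card_fin, three_pow_succ_sub_one_div_two]
    have := le_three_pow_sub_one_div_two k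
    congr 1
    omega

theorem pow_card_le_card_isPerfectCode {ι κ : Type*} [Fintype ι] [Fintype κ]
    {C : Set (ι → ZMod 3)} (hC : IsPerfectCode C) (e : κ ≃ ι ⊕ ι ⊕ ι ⊕ Unit) :
    (3 * 2 ^ Fintype.card ι) ^ Nat.card C ≤
      Nat.card {D : Set (κ → ZMod 3) // IsPerfectCode D} := by
  let code (p : (C → ZMod 3) × (C → ι → (ZMod 3)ˣ)) : {D : Set (κ → ZMod 3) // IsPerfectCode D} :=
    ⟨(· ∘ e) '' vasilevCode C p.1 p.2, (hC.vasilevCode p.1 p.2).image_comp_equiv e⟩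
  have hcode : Injective code := fun p q h =>
    vasilevCode_injective <| Set.image_injective.2 e.surjective.injective_comp_right <|
      congrArg Subtype.val h
  calc (3 * 2 ^ Fintype.card ι) ^ Nat.card C
      = Nat.card ((C → ZMod 3) × (C → ι → (ZMod 3)ˣ)) := by
        simp [Nat.card_fun, mul_pow, Nat.totient_prime Nat.prime_three]
    _ ≤ _ := Nat.card_le_card_of_injective code hcode

theorem stmt_15_general {m n t : ℕ} (hm : 2 ≤ m)
    (hn : n = (3 ^ m - 1) / 2)
    (ht' : t = (3 ^ (m - 1) - 1) / 2) :
    (3 * 2 ^ t) ^ 3 ^ (t + 1 - m) ≤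
      Nat.card {C : Set (Fin n → ZMod 3) // IsPerfectCode C} := by
  have hlen : 3 * t + 1 = n := by
    rw [hn, ht', ← three_pow_succ_sub_one_div_two, Nat.sub_add_cancel (by omega)]
  have hexp : t - (m - 1) = t + 1 - m := by omega
  have hcode := exists_isPerfectCode_card_eq (m - 1)
  rw [← ht', hexp] at hcode
  obtain ⟨C, hC, hcard⟩ := hcode
  have e : Fin n ≃ Fin t ⊕ Fin t ⊕ Fin t ⊕ Unit := Fintype.equivOfCardEq (by simp [← hlen]; ring)
  simpa [hcard] using pow_card_le_card_isPerfectCode hC e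

/-- For `n = (3^m - 1)/2` and `t = (n-1)/3 = (3^(m-1)-1)/2`, the number of perfect
ternary codes of length `n` is at least `(3·2^t) ^ (3^(t-m+1))`. -/
theorem stmt_15 {m n t : ℕ} (hm : 2 ≤ m)
    (hn : n = (3 ^ m - 1) / 2)
    (ht : t = (n - 1) / 3) (ht' : t = (3 ^ (m - 1) - 1) / 2) :
    (3 * 2 ^ t) ^ 3 ^ (t + 1 - m) ≤
      Nat.card {C : Set (Fin n → ZMod 3) // IsPerfectCode C} :=
  stmt_15_general hm hn ht'
end
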